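/- arXiv:2407.15760 — 3 statements merged into one kernel-verified Lean document; each statement's English description precedes it below -/
import Mathlib

section
/- Let v₀, q₀ ∈ ℝ be such that q₀ lies in the subdifferential of L_r at v₀, i.e., L_r(v) ≥ L_r(v₀) + q₀(v − v₀) for all v ∈ ℝ. Then: (i) if L_r(v₀) < 0, then H_r(q₀) < 2; and (ii) if moreover D > 2 and L_r(v₀) ≤ 0, then H_r(q₀) < 2. -/
open Real Filter Set

noncomputable section

/-- The field Lagrangian `L_f(v₁,v₂) = (v₁² + v₂²)/4 − 1`. -/
def Lf (v₁ v₂ : ℝ) : ℝ := (v₁ ^ 2 + v₂ ^ 2) / 4 - 1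

/-- The effective road Hamiltonian `H_r(q) = q² + (p_q)² + 1` built from the
critical-slope function `pq`. -/
def Hr (pq : ℝ → ℝ) (q : ℝ) : ℝ := q ^ 2 + pq q ^ 2 + 1

/-- The road Lagrangian: the Legendre transform of `Hr`. -/
def Lr (pq : ℝ → ℝ) (v : ℝ) : ℝ := ⨆ q : ℝ, (v * q - Hr pq q)

/-- `pq` assigns to each `q` the critical slope `p_q`: it equals `0` when
`(D−1)q² ≤ 1`, and otherwise it is the unique positive root of
`(D−1)q² = p² + 1 + μp/(κν + p)`. -/
def IsCriticalSlope (D μ ν κ : ℝ) (pq : ℝ → ℝ) : Prop :=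
  ∀ q : ℝ,
    ((D - 1) * q ^ 2 ≤ 1 → pq q = 0) ∧
    (1 < (D - 1) * q ^ 2 →
      0 < pq q ∧ (D - 1) * q ^ 2 = pq q ^ 2 + 1 + μ * pq q / (κ * ν + pq q))

/-- The set of candidate costs in the control problem at a point `(x,y)` with
`x ≥ 0`, `y ≥ 0`: the pure-field cost, the broken road-then-field costs, and
(when `y = 0`) the pure-road cost. -/
def Jset (pq : ℝ → ℝ) (x y : ℝ) : Set ℝ :=
  {Lf x y} ∪
    {c | ∃ τ z : ℝ, 0 < τ ∧ τ < 1 ∧ 0 ≤ z ∧ z ≤ x ∧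
      c = (1 - τ) * Lf ((x - z) / (1 - τ)) (y / (1 - τ)) + τ * Lr pq (z / τ)} ∪
    (if y = 0 then {Lr pq x} else ∅)

/-- The value function `J(x,y)`, extended evenly in `x`. -/
def J (pq : ℝ → ℝ) (x y : ℝ) : ℝ := sInf (Jset pq |x| y)
/-- The field Hamiltonian `H_f(q,p) = q² + p² + 1`. -/
def Hf (q p : ℝ) : ℝ := q ^ 2 + p ^ 2 + 1

/-- The road boundary Hamiltonian `F₀(q,p) = Dq² − μp/(κν + p)`. -/
def F0 (D μ ν κ q p : ℝ) : ℝ := D * q ^ 2 - μ * p / (κ * ν + p)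

/-- The spreading speed along the road, `inf_{q>0} H_r(q)/q`. -/
def roadSpeed (pq : ℝ → ℝ) : ℝ := sInf ((fun q => Hr pq q / q) '' Set.Ioi (0 : ℝ))

/-- The directional spreading speed in direction `ϑ` (measured from the
positive `y`-axis). -/
def cstar (pq : ℝ → ℝ) (ϑ : ℝ) : ℝ :=
  sSup {r : ℝ | 0 ≤ r ∧ J pq (r * Real.sin ϑ) (r * Real.cos ϑ) ≤ 0}

/-- Reflection across the line through the origin in direction `(cos a, sin a)`. -/
def Psi (a : ℝ) (p : ℝ × ℝ) : ℝ × ℝ :=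
  (p.1 * Real.cos (2 * a) + p.2 * Real.sin (2 * a),
   p.1 * Real.sin (2 * a) - p.2 * Real.cos (2 * a))

/-- The closed cone of opening angle `2a` between the positive `x`-axis and the
ray at angle `π/2 − 2a` from the positive `y`-axis. -/
def coneA (a : ℝ) : Set (ℝ × ℝ) :=
  {p | ∃ r ϑ : ℝ, 0 ≤ r ∧ π / 2 - 2 * a ≤ ϑ ∧ ϑ ≤ π / 2 ∧
    p = (r * Real.sin ϑ, r * Real.cos ϑ)}

/-!
`H_r` is convex: `q ↦ p_q²` is `q ↦ (D - 1) q²` followed by the increasing convex inverse of the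
concave map `a ↦ a + 1 + μ √a / (κν + √a)`. Hence a subgradient `q₀` of the Legendre transform
`L_r` at `v₀` gives back the subgradient `v₀` of `H_r` at `q₀`, with `L_r(v₀) = v₀ q₀ - H_r(q₀)`,
so the hypotheses say `v₀ q₀ ≤ H_r(q₀)`, strictly in case (i). By symmetry `q₀ ≥ 0`.

Where `p_{q₀} = 0` we have `H_r(q₀) = q₀² + 1`, and the subgradient is at least the left derivative
`2 q₀`, which forces `q₀² < 1`. Where `p₀ = p_{q₀} > 0`, parametrize the steep branch by `p`, as
`q = √(G(p) / (D - 1))` with `G(p) = p² + 1 + μp / (κν + p)` (`criticalSlopeRHS`): the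
subgradient inequality along this curve is minimal at `p₀`, which pins down
`v₀ G'(p₀) = 2 q₀ (G'(p₀) + 2 (D - 1) p₀)`, and `v₀ q₀ ≤ H_r(q₀)` becomes a polynomial inequality
that gives `H_r(q₀) < 2`.
-/

def HasSubgradientAt (f : ℝ → ℝ) (g x : ℝ) : Prop :=
  ∀ y, f x + g * (y - x) ≤ f y

lemma HasSubgradientAt.comp_neg {f : ℝ → ℝ} {g x : ℝ} (h : HasSubgradientAt f g x) :
    HasSubgradientAt (fun y => f (-y)) (-g) (-x) := fun y => by
  have := h (-y)
  simp only [neg_neg]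
  linarith

lemma ConvexOn.exists_hasSubgradientAt {f : ℝ → ℝ} (hf : ConvexOn ℝ univ f) (x : ℝ) :
    ∃ g, HasSubgradientAt f g x := by
  have hx : x ∈ interior univ := by simp
  refine ⟨derivWithin f (Ioi x) x, fun y => ?_⟩
  rcases lt_trichotomy x y with hxy | rfl | hyx
  · have := hf.rightDeriv_le_slope_of_mem_interior hx (mem_univ y) hxy
    rw [slope_def_field, le_div_iff₀ (sub_pos.2 hxy)] at this
    linarith
  · simp
  · have := (hf.slope_le_leftDeriv_of_mem_interior (mem_univ y) hx hyx).trans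
      (hf.leftDeriv_le_rightDeriv_of_mem_interior hx)
    rw [slope_def_field, div_le_iff₀ (sub_pos.2 hyx)] at this
    linarith

section Saturation

variable {μ c : ℝ}

lemma monotoneOn_mul_div_add (hμ : 0 ≤ μ) (hc : 0 < c) :
    MonotoneOn (fun r => μ * r / (c + r)) (Ici 0) := by
  intro r (hr : 0 ≤ r) s (hs : 0 ≤ s) hrs
  dsimp only
  rw [div_le_div_iff₀ (by linarith) (by linarith)]
  nlinarith [mul_nonneg (mul_nonneg hμ hc.le) (sub_nonneg.2 hrs)]

lemma concaveOn_mul_div_add (hμ : 0 ≤ μ) (hc : 0 < c) :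
    ConcaveOn ℝ (Ici 0) (fun r => μ * r / (c + r)) := by
  refine ⟨convex_Ici 0, fun r (hr : 0 ≤ r) s (hs : 0 ≤ s) a b ha hb hab => ?_⟩
  obtain rfl : b = 1 - a := by linarith
  have hcr : 0 < c + r := by linarith
  have hcs : 0 < c + s := by linarith
  simp only [smul_eq_mul]
  rw [mul_div_assoc', mul_div_assoc', div_add_div _ _ hcr.ne' hcs.ne',
    div_le_div_iff₀ (mul_pos hcr hcs) (by nlinarith)]
  nlinarith [mul_nonneg (mul_nonneg (mul_nonneg hμ hc.le) (mul_nonneg ha hb)) (sq_nonneg (r - s))]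

def criticalSlopeRHS (μ c p : ℝ) : ℝ := p ^ 2 + 1 + μ * p / (c + p)

lemma one_lt_criticalSlopeRHS (hμ : 0 ≤ μ) (hc : 0 < c) {p : ℝ} (hp : 0 < p) :
    1 < criticalSlopeRHS μ c p := by
  unfold criticalSlopeRHS
  have : 0 ≤ μ * p / (c + p) := by positivity
  nlinarith

lemma strictMonoOn_criticalSlopeRHS (hμ : 0 ≤ μ) (hc : 0 < c) :
    StrictMonoOn (criticalSlopeRHS μ c) (Ici 0) := by
  intro p (hp : 0 ≤ p) r (hr : 0 ≤ r) hpr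
  have := monotoneOn_mul_div_add hμ hc hp hr hpr.le
  unfold criticalSlopeRHS
  simp only at this
  nlinarith

lemma hasDerivAt_criticalSlopeRHS {p : ℝ} (hp : c + p ≠ 0) :
    HasDerivAt (criticalSlopeRHS μ c) (2 * p + μ * c / (c + p) ^ 2) p := by
  have h := (((hasDerivAt_pow 2 p).add_const 1).add
    (((hasDerivAt_id p).const_mul μ).div ((hasDerivAt_id p).const_add c) hp))
  refine h.congr_deriv ?_
  simp only [id, mul_one, Nat.cast_ofNat]
  field_simp
  ring

lemma concaveOn_criticalSlopeRHS_sqrt (hμ : 0 ≤ μ) (hc : 0 < c) :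
    ConcaveOn ℝ (Ici 0) (fun a => criticalSlopeRHS μ c √a) := by
  have himage : Real.sqrt '' Ici 0 = Ici 0 :=
    Set.ext fun r => ⟨by rintro ⟨a, -, rfl⟩; exact Real.sqrt_nonneg a,
      fun (hr : 0 ≤ r) => ⟨r ^ 2, sq_nonneg r, Real.sqrt_sq hr⟩⟩
  have hsat : ConcaveOn ℝ (Ici 0) ((fun r => μ * r / (c + r)) ∘ Real.sqrt) :=
    ConcaveOn.comp (by rw [himage]; exact concaveOn_mul_div_add hμ hc) strictConcaveOn_sqrt.concaveOn
      (by rw [himage]; exact monotoneOn_mul_div_add hμ hc)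
  refine (((concaveOn_id (convex_Ici 0)).add_const 1).add hsat).congr fun a (ha : 0 ≤ a) => ?_
  simp [criticalSlopeRHS, Real.sq_sqrt ha]

end Saturation

lemma sub_Hr_le_Lr (pq : ℝ → ℝ) (v q : ℝ) : v * q - Hr pq q ≤ Lr pq v := by
  refine le_ciSup (f := fun q => v * q - Hr pq q) ⟨v ^ 2 / 4 - 1, ?_⟩ q
  rintro _ ⟨r, rfl⟩
  dsimp only [Hr]
  nlinarith [sq_nonneg (v / 2 - r), sq_nonneg (pq r)]

lemma hasSubgradientAt_Hr_of_hasSubgradientAt_Lr {pq : ℝ → ℝ} (hH : ConvexOn ℝ univ (Hr pq))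
    {v₀ q₀ : ℝ} (hL : HasSubgradientAt (Lr pq) q₀ v₀) :
    HasSubgradientAt (Hr pq) v₀ q₀ ∧ Lr pq v₀ = v₀ * q₀ - Hr pq q₀ := by
  obtain ⟨b, hb⟩ := hH.exists_hasSubgradientAt q₀
  have hLb : Lr pq b ≤ b * q₀ - Hr pq q₀ := ciSup_le fun q => by linarith [hb q]
  have hLv₀ : Lr pq v₀ = v₀ * q₀ - Hr pq q₀ :=
    le_antisymm (by linarith [hL b]) (sub_Hr_le_Lr pq v₀ q₀)
  exact ⟨fun q => by linarith [sub_Hr_le_Lr pq v₀ q], hLv₀⟩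

lemma sq_add_sq_add_one_lt_two {D μ c p q v : ℝ} (hD : 1 < D) (hμ : 0 < μ) (hc : 0 < c)
    (hp : 0 < p) (hq : (D - 1) * q ^ 2 = criticalSlopeRHS μ c p)
    (hv : v * (2 * p + μ * c / (c + p) ^ 2)
      = 2 * q * (2 * p + μ * c / (c + p) ^ 2 + 2 * (D - 1) * p))
    (hle : v * q ≤ q ^ 2 + p ^ 2 + 1) : q ^ 2 + p ^ 2 + 1 < 2 := by
  set B := μ * c / (c + p) ^ 2
  set m := μ * p / (c + p)
  have hB : 0 < B := by positivity
  have hm : 0 < m := by positivity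
  have hpB : p * B ≤ m := by
    rw [mul_div_assoc', div_le_div_iff₀ (by positivity) (by positivity)]
    nlinarith [mul_pos (mul_pos hμ hp) (mul_pos hc hp)]
  have hE : (D - 1) * q ^ 2 = p ^ 2 + 1 + m := hq
  have h1 : 2 * ((D - 1) * q ^ 2) * (2 * D * p + B)
      ≤ ((D - 1) * q ^ 2 + (D - 1) * (p ^ 2 + 1)) * (2 * p + B) := by
    have := mul_le_mul_of_nonneg_left hle (by positivity : 0 ≤ (D - 1) * (2 * p + B))
    linear_combination this - (D - 1) * q * hv
  rw [hE] at h1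
  have h2 : (D - 1) * (p * B) < (D - 1) * m + D * (p ^ 2 + 1 + m) := by
    nlinarith [mul_le_mul_of_nonneg_left hpB (by linarith : (0:ℝ) ≤ D - 1)]
  have h3 : ((D - 1) * m + 2 * (D - 1) * p ^ 2) * B < (D - 2) * (p ^ 2 + 1 + m) * B := by
    nlinarith
  have h4 := lt_of_mul_lt_mul_right h3 hB.le
  nlinarith

namespace IsCriticalSlope

variable {D μ ν κ : ℝ} {pq : ℝ → ℝ} (hpq : IsCriticalSlope D μ ν κ pq)
include hpq

lemma nonneg (q : ℝ) : 0 ≤ pq q := by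
  rcases le_or_gt ((D - 1) * q ^ 2) 1 with h | h
  · exact ((hpq q).1 h).ge
  · exact ((hpq q).2 h).1.le

lemma le_criticalSlopeRHS (q : ℝ) : (D - 1) * q ^ 2 ≤ criticalSlopeRHS μ (κ * ν) (pq q) := by
  rcases le_or_gt ((D - 1) * q ^ 2) 1 with h | h
  · simpa [criticalSlopeRHS, (hpq q).1 h] using h
  · exact ((hpq q).2 h).2.le

lemma le_of_le_criticalSlopeRHS (hμ : 0 ≤ μ) (hc : 0 < κ * ν) {q p : ℝ} (hp : 0 ≤ p)
    (h : (D - 1) * q ^ 2 ≤ criticalSlopeRHS μ (κ * ν) p) : pq q ≤ p := by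
  rcases le_or_gt ((D - 1) * q ^ 2) 1 with hflat | hsteep
  · rw [(hpq q).1 hflat]
    exact hp
  · rw [← (strictMonoOn_criticalSlopeRHS hμ hc).le_iff_le (hpq.nonneg q) hp]
    exact ((hpq q).2 hsteep).2.symm.trans_le h

lemma eq_of_eq_criticalSlopeRHS (hμ : 0 ≤ μ) (hc : 0 < κ * ν) {q p : ℝ} (hp : 0 < p)
    (h : (D - 1) * q ^ 2 = criticalSlopeRHS μ (κ * ν) p) : pq q = p := by
  have hsteep : 1 < (D - 1) * q ^ 2 := h ▸ one_lt_criticalSlopeRHS hμ hc hp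
  exact (strictMonoOn_criticalSlopeRHS hμ hc).injOn (hpq.nonneg q) hp.le
    (((hpq q).2 hsteep).2.symm.trans h)

lemma apply_neg (hμ : 0 ≤ μ) (hc : 0 < κ * ν) (q : ℝ) : pq (-q) = pq q := by
  rcases le_or_gt ((D - 1) * q ^ 2) 1 with hflat | hsteep
  · rw [(hpq q).1 hflat, (hpq (-q)).1 (by rwa [neg_sq])]
  · obtain ⟨hpos, heq⟩ := (hpq q).2 hsteep
    exact hpq.eq_of_eq_criticalSlopeRHS hμ hc hpos (by rwa [neg_sq])

lemma convexOn_sq (hD : 1 ≤ D) (hμ : 0 ≤ μ) (hc : 0 < κ * ν) :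
    ConvexOn ℝ univ (fun q => pq q ^ 2) := by
  refine ⟨convex_univ, fun x _ y _ a b ha hb hab => ?_⟩
  simp only [smul_eq_mul]
  set w := a * pq x ^ 2 + b * pq y ^ 2
  have hw : 0 ≤ w := by positivity
  have hsq : (a * x + b * y) ^ 2 ≤ a * x ^ 2 + b * y ^ 2 := by
    obtain rfl : b = 1 - a := by linarith
    nlinarith [mul_nonneg (mul_nonneg ha hb) (sq_nonneg (x - y))]
  have hF := (concaveOn_criticalSlopeRHS_sqrt hμ hc).2 (sq_nonneg (pq x)) (sq_nonneg (pq y))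
    ha hb hab
  simp only [smul_eq_mul, Real.sqrt_sq (hpq.nonneg _)] at hF
  have hle : (D - 1) * (a * x + b * y) ^ 2 ≤ criticalSlopeRHS μ (κ * ν) √w := by
    calc (D - 1) * (a * x + b * y) ^ 2
        ≤ a * ((D - 1) * x ^ 2) + b * ((D - 1) * y ^ 2) := by
          nlinarith [mul_le_mul_of_nonneg_left hsq (sub_nonneg.2 hD)]
      _ ≤ a * criticalSlopeRHS μ (κ * ν) (pq x) + b * criticalSlopeRHS μ (κ * ν) (pq y) := by
          gcongr
          exacts [hpq.le_criticalSlopeRHS x, hpq.le_criticalSlopeRHS y]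
      _ ≤ criticalSlopeRHS μ (κ * ν) √w := hF
  have := hpq.le_of_le_criticalSlopeRHS hμ hc (Real.sqrt_nonneg w) hle
  calc pq (a * x + b * y) ^ 2 ≤ √w ^ 2 := by gcongr; exact hpq.nonneg _
    _ = w := Real.sq_sqrt hw

lemma Hr_neg (hμ : 0 ≤ μ) (hc : 0 < κ * ν) (q : ℝ) : Hr pq (-q) = Hr pq q := by
  simp only [Hr, hpq.apply_neg hμ hc, neg_sq]

lemma convexOn_Hr (hD : 1 ≤ D) (hμ : 0 ≤ μ) (hc : 0 < κ * ν) : ConvexOn ℝ univ (Hr pq) :=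
  ((even_two.convexOn_pow).add (hpq.convexOn_sq hD hμ hc)).add_const 1

lemma two_mul_le_of_hasSubgradientAt_of_flat {v₀ q₀ : ℝ} (hq₀ : 0 < q₀)
    (hflat : (D - 1) * q₀ ^ 2 ≤ 1) (hv : HasSubgradientAt (Hr pq) v₀ q₀) : 2 * q₀ ≤ v₀ := by
  have hslope : ∀ t, 0 ≤ t → t < q₀ → q₀ + t ≤ v₀ := fun t ht htq => by
    have h := hv t
    simp only [Hr, (hpq q₀).1 hflat, (hpq t).1 (by nlinarith)] at h
    nlinarith
  by_contra! h
  linarith [hslope (v₀ / 2) (by linarith [hslope 0 le_rfl hq₀]) (by linarith)]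

lemma eq_of_hasSubgradientAt_of_pos (hD : 1 < D) (hμ : 0 ≤ μ) (hc : 0 < κ * ν)
    {v₀ q₀ S' : ℝ} (hq₀ : 0 < q₀) (hp₀ : 0 < pq q₀)
    (hS' : HasDerivAt (criticalSlopeRHS μ (κ * ν)) S' (pq q₀))
    (hv : HasSubgradientAt (Hr pq) v₀ q₀) :
    v₀ * S' = 2 * q₀ * (S' + 2 * (D - 1) * pq q₀) := by
  set S := criticalSlopeRHS μ (κ * ν)
  set p₀ := pq q₀
  have hD1 : 0 < D - 1 := sub_pos.2 hD
  have hsteep : 1 < (D - 1) * q₀ ^ 2 := by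
    by_contra! hflat
    exact hp₀.ne' ((hpq q₀).1 hflat)
  have hq₀S : q₀ ^ 2 = S p₀ / (D - 1) := by
    rw [eq_div_iff hD1.ne', mul_comm]; exact ((hpq q₀).2 hsteep).2
  -- `φ p` is the positive `q` with `p_q = p`
  let φ p := √(S p / (D - 1))
  have hφ₀ : φ p₀ = q₀ := by simp only [φ, ← hq₀S, Real.sqrt_sq hq₀.le]
  have hφ : ∀ p, 0 < p → pq (φ p) = p ∧ φ p ^ 2 = S p / (D - 1) := fun p hp => by
    have hsq : φ p ^ 2 = S p / (D - 1) :=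
      Real.sq_sqrt (div_nonneg (zero_le_one.trans (one_lt_criticalSlopeRHS hμ hc hp).le) hD1.le)
    refine ⟨hpq.eq_of_eq_criticalSlopeRHS hμ hc hp ?_, hsq⟩
    rw [hsq, mul_div_cancel₀ _ hD1.ne']
  let k p := S p / (D - 1) + p ^ 2 + 1 - v₀ * φ p
  have hmin : IsLocalMin k p₀ := by
    filter_upwards [Ioi_mem_nhds hp₀] with p hp
    have h := hv (φ p)
    simp only [Hr, (hφ p hp).1, (hφ p hp).2] at h
    simp only [k, hφ₀, ← hq₀S]
    linarith
  have hk : HasDerivAt k (S' / (D - 1) + 2 * p₀ - v₀ * (S' / (D - 1) / (2 * q₀))) p₀ := by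
    have hφ' := (hS'.div_const (D - 1)).sqrt (by rw [← hq₀S]; positivity)
    rw [← hq₀S, Real.sqrt_sq hq₀.le] at hφ'
    have := ((hS'.div_const (D - 1)).add (hasDerivAt_pow 2 p₀)).add_const 1 |>.sub
      (hφ'.const_mul v₀)
    refine this.congr_deriv ?_
    norm_num
  have := hmin.hasDerivAt_eq_zero hk
  field_simp at this
  linarith

lemma Hr_lt_two_of_nonneg (hD : 1 < D) (hμ : 0 < μ) (hc : 0 < κ * ν) {v₀ q₀ : ℝ}
    (hq₀ : 0 ≤ q₀) (hv : HasSubgradientAt (Hr pq) v₀ q₀) (hle : v₀ * q₀ ≤ Hr pq q₀)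
    (hside : v₀ * q₀ < Hr pq q₀ ∨ 2 < D) : Hr pq q₀ < 2 := by
  rcases le_or_gt ((D - 1) * q₀ ^ 2) 1 with hflat | hsteep
  · have hp₀ := (hpq q₀).1 hflat
    suffices q₀ ^ 2 < 1 by simp only [Hr, hp₀]; linarith
    rcases hside with hstrict | hD2
    · by_contra! h1
      have := hpq.two_mul_le_of_hasSubgradientAt_of_flat (by nlinarith) hflat hv
      simp only [Hr, hp₀] at hstrict
      nlinarith
    · nlinarith
  · obtain ⟨hp₀, heq⟩ := (hpq q₀).2 hsteep
    have hq₀' : 0 < q₀ := hq₀.lt_of_ne (by rintro rfl; linarith)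
    have hS' := hasDerivAt_criticalSlopeRHS (μ := μ) (by positivity : κ * ν + pq q₀ ≠ 0)
    exact sq_add_sq_add_one_lt_two hD hμ hc hp₀ heq
      (hpq.eq_of_hasSubgradientAt_of_pos hD hμ.le hc hq₀' hp₀ hS' hv) hle

lemma Hr_lt_two (hD : 1 < D) (hμ : 0 < μ) (hc : 0 < κ * ν) {v₀ q₀ : ℝ}
    (hv : HasSubgradientAt (Hr pq) v₀ q₀) (hle : v₀ * q₀ ≤ Hr pq q₀)
    (hside : v₀ * q₀ < Hr pq q₀ ∨ 2 < D) : Hr pq q₀ < 2 := by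
  rcases le_total 0 q₀ with hq₀ | hq₀
  · exact hpq.Hr_lt_two_of_nonneg hD hμ hc hq₀ hv hle hside
  · have hHr := hpq.Hr_neg hμ.le hc
    have hv' : HasSubgradientAt (Hr pq) (-v₀) (-q₀) := by
      simpa only [hHr] using hv.comp_neg
    rw [← hHr]
    refine hpq.Hr_lt_two_of_nonneg hD hμ hc (neg_nonneg.2 hq₀) hv' ?_ ?_ <;>
      rwa [hHr, neg_mul_neg]

end IsCriticalSlope

/-- If `q₀` is in the subdifferential of `L_r` at `v₀`, then `L_r(v₀) < 0`
implies `H_r(q₀) < 2`; and if moreover `D > 2`, `L_r(v₀) ≤ 0` already implies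
`H_r(q₀) < 2`. -/
theorem Hr_lt_two_of_subdifferential
    (D μ ν κ : ℝ) (hD : 1 < D) (hμ : 0 < μ) (hν : 0 < ν) (hκ : 0 < κ)
    (pq : ℝ → ℝ) (hpq : IsCriticalSlope D μ ν κ pq)
    (v₀ q₀ : ℝ) (hsub : ∀ v : ℝ, Lr pq v₀ + q₀ * (v - v₀) ≤ Lr pq v) :
    (Lr pq v₀ < 0 → Hr pq q₀ < 2) ∧
      (2 < D → Lr pq v₀ ≤ 0 → Hr pq q₀ < 2) := by
  have hc : 0 < κ * ν := mul_pos hκ hν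
  obtain ⟨hv, hL⟩ :=
    hasSubgradientAt_Hr_of_hasSubgradientAt_Lr (hpq.convexOn_Hr hD.le hμ.le hc) hsub
  exact ⟨fun hL0 => hpq.Hr_lt_two hD hμ hc hv (by linarith) (.inl (by linarith)),
    fun hD2 hL0 => hpq.Hr_lt_two hD hμ hc hv (by linarith) (.inr hD2)⟩
end
end

section
/- The value function is rotationally monotone from the road toward the vertical axis: for every r > 0 and all angles 0 ≤ ϑ₁ ≤ ϑ₂ ≤ π/2 (measured from the positive y-axis toward the positive x-axis), one has J(r sin ϑ₂, r cos ϑ₂) ≤ J(r sin ϑ₁, r cos ϑ₁). -/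
open Real Filter Set

noncomputable section

/-! Rotating `(x, y)` toward the road along a circle about the origin increases `|x|` and
keeps `x² + y²`. Every road-then-field path for the old endpoint (leave the road at `z ≤ |x₁|`)
is then admissible for the new one, with a shorter field leg since
`(|x| - z)² + y² = x² + y² - 2|x|z + z²`. The pure-field cost depends only on `x² + y²`, and the
pure-road option needs `y₁ = 0`, which forces `y₂ = 0`. -/

lemma Lr_bddAbove (pq : ℝ → ℝ) (v : ℝ) :
    BddAbove (Set.range fun q => v * q - Hr pq q) := by
  refine ⟨v ^ 2 / 4 - 1, ?_⟩
  rintro _ ⟨q, rfl⟩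
  simp only [Hr]
  nlinarith [sq_nonneg (v / 2 - q), sq_nonneg (pq q)]

lemma neg_Hr_zero_le_Lr (pq : ℝ → ℝ) (v : ℝ) : -Hr pq 0 ≤ Lr pq v := by
  simpa [Lr] using le_ciSup (Lr_bddAbove pq v) 0

lemma neg_one_le_Lf (x y : ℝ) : -1 ≤ Lf x y := by
  simp only [Lf]
  nlinarith [sq_nonneg x, sq_nonneg y]

lemma neg_Hr_zero_le_Lf (pq : ℝ → ℝ) (x y : ℝ) : -Hr pq 0 ≤ Lf x y := by
  have : 1 ≤ Hr pq 0 := by simp only [Hr]; nlinarith [sq_nonneg (pq 0)]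
  linarith [neg_one_le_Lf x y]

lemma Jset_bddBelow (pq : ℝ → ℝ) (x y : ℝ) : BddBelow (Jset pq x y) := by
  refine ⟨-Hr pq 0, ?_⟩
  rintro c ((rfl | ⟨τ, z, hτ0, hτ1, -, -, rfl⟩) | hc)
  · exact neg_Hr_zero_le_Lf pq x y
  · nlinarith [neg_Hr_zero_le_Lf pq ((x - z) / (1 - τ)) (y / (1 - τ)),
      neg_Hr_zero_le_Lr pq (z / τ)]
  · split_ifs at hc
    · exact (Set.mem_singleton_iff.mp hc) ▸ neg_Hr_zero_le_Lr pq x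
    · exact absurd hc (Set.notMem_empty c)

lemma Lf_mem_Jset (pq : ℝ → ℝ) (x y : ℝ) : Lf x y ∈ Jset pq x y :=
  Or.inl (Or.inl rfl)

lemma mul_Lf_div_eq {s : ℝ} (hs : s ≠ 0) (u w : ℝ) :
    s * Lf (u / s) (w / s) = (u ^ 2 + w ^ 2) / (4 * s) - s := by
  simp only [Lf]
  field_simp

lemma Lf_eq_of_sq_add_sq_eq {x₁ y₁ x₂ y₂ : ℝ} (h : x₁ ^ 2 + y₁ ^ 2 = x₂ ^ 2 + y₂ ^ 2) :
    Lf x₁ y₁ = Lf x₂ y₂ := by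
  simp only [Lf, h]

lemma sub_sq_add_sq_le_of_le {x₁ y₁ x₂ y₂ z : ℝ} (hz : 0 ≤ z) (hx : x₁ ≤ x₂)
    (h : x₁ ^ 2 + y₁ ^ 2 = x₂ ^ 2 + y₂ ^ 2) :
    (x₂ - z) ^ 2 + y₂ ^ 2 ≤ (x₁ - z) ^ 2 + y₁ ^ 2 := by
  nlinarith [mul_le_mul_of_nonneg_left hx hz]

lemma exists_mem_Jset_le {pq : ℝ → ℝ} {x₁ y₁ x₂ y₂ : ℝ} (hx₁ : 0 ≤ x₁) (hx : x₁ ≤ x₂)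
    (h : x₁ ^ 2 + y₁ ^ 2 = x₂ ^ 2 + y₂ ^ 2) (hy : y₁ = 0 → y₂ = 0) :
    ∀ c ∈ Jset pq x₁ y₁, ∃ c' ∈ Jset pq x₂ y₂, c' ≤ c := by
  rintro c ((rfl | ⟨τ, z, hτ0, hτ1, hz0, hzx, rfl⟩) | hc)
  · exact ⟨_, Lf_mem_Jset pq x₂ y₂, (Lf_eq_of_sq_add_sq_eq h).ge⟩
  · refine ⟨_, Or.inl (Or.inr ⟨τ, z, hτ0, hτ1, hz0, hzx.trans hx, rfl⟩), ?_⟩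
    have h1τ : (0 : ℝ) < 1 - τ := by linarith
    rw [mul_Lf_div_eq h1τ.ne', mul_Lf_div_eq h1τ.ne']
    gcongr ?_ / _ - _ + _
    exact sub_sq_add_sq_le_of_le hz0 hx h
  · split_ifs at hc with hy₁
    · have hy₂ := hy hy₁
      have hx₁₂ : x₁ = x₂ := by subst hy₁ hy₂; nlinarith
      subst hx₁₂ hy₂
      exact ⟨c, Or.inr (by simpa using hc), le_rfl⟩
    · exact absurd hc (Set.notMem_empty c)

lemma J_le_of_abs_le {pq : ℝ → ℝ} {x₁ y₁ x₂ y₂ : ℝ} (hx : |x₁| ≤ |x₂|)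
    (h : x₁ ^ 2 + y₁ ^ 2 = x₂ ^ 2 + y₂ ^ 2) : J pq x₂ y₂ ≤ J pq x₁ y₁ := by
  rw [← sq_abs x₁, ← sq_abs x₂] at h
  have hy : y₁ = 0 → y₂ = 0 := fun hy₁ ↦ by
    subst hy₁
    nlinarith [sq_nonneg y₂, abs_nonneg x₁, mul_le_mul hx hx (abs_nonneg x₁) (abs_nonneg x₂)]
  refine le_csInf ⟨_, Lf_mem_Jset pq _ _⟩ fun c hc ↦ ?_
  obtain ⟨c', hc', hle⟩ := exists_mem_Jset_le (abs_nonneg x₁) hx h hy c hc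
  exact csInf_le_of_le (Jset_bddBelow pq _ _) hc' hle

theorem J_rotationally_monotone_general
    (pq : ℝ → ℝ)
    (r ϑ₁ ϑ₂ : ℝ) (h1 : 0 ≤ ϑ₁) (h12 : ϑ₁ ≤ ϑ₂) (h2 : ϑ₂ ≤ π / 2) :
    J pq (r * Real.sin ϑ₂) (r * Real.cos ϑ₂) ≤
      J pq (r * Real.sin ϑ₁) (r * Real.cos ϑ₁) := by
  refine J_le_of_abs_le ?_ ?_
  · have hsin₁ : 0 ≤ Real.sin ϑ₁ := Real.sin_nonneg_of_nonneg_of_le_pi h1 (by linarith)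
    have hsin : Real.sin ϑ₁ ≤ Real.sin ϑ₂ :=
      Real.sin_le_sin_of_le_of_le_pi_div_two (by linarith) h2 h12
    rw [abs_mul, abs_mul, abs_of_nonneg hsin₁, abs_of_nonneg (hsin₁.trans hsin)]
    gcongr
  · linear_combination r ^ 2 * (Real.sin_sq_add_cos_sq ϑ₁ - Real.sin_sq_add_cos_sq ϑ₂)

/-- Rotational monotonicity of the value function from the road toward the
vertical axis: for `r > 0` and angles `0 ≤ ϑ₁ ≤ ϑ₂ ≤ π/2` measured from the
positive `y`-axis, `J(r sin ϑ₂, r cos ϑ₂) ≤ J(r sin ϑ₁, r cos ϑ₁)`. -/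
theorem J_rotationally_monotone
    (D μ ν κ : ℝ) (hD : 1 < D) (hμ : 0 < μ) (hν : 0 < ν) (hκ : 0 < κ)
    (pq : ℝ → ℝ) (hpq : IsCriticalSlope D μ ν κ pq)
    (r ϑ₁ ϑ₂ : ℝ) (hr : 0 < r) (h1 : 0 ≤ ϑ₁) (h12 : ϑ₁ ≤ ϑ₂) (h2 : ϑ₂ ≤ π / 2) :
    J pq (r * Real.sin ϑ₂) (r * Real.cos ϑ₂) ≤
      J pq (r * Real.sin ϑ₁) (r * Real.cos ϑ₁) :=
  J_rotationally_monotone_general pq r ϑ₁ ϑ₂ h1 h12 h2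
end
end

section
/- Fix a ∈ (0, π/2] and define J_a(x,y) = min{ J(x,y), J(Ψ_a(x,y)) } for (x,y) in the closed cone Ω̄_a. If (x,y) = (r sin ϑ, r cos ϑ) with r ≥ 0 and ϑ ∈ [π/2 − a, π/2] (the half of the cone adjacent to the positive x-axis), then J_a(x,y) = J(x,y); if instead ϑ ∈ [π/2 − 2a, π/2 − a], then J_a(x,y) = J(Ψ_a(x,y)). -/
open Real Filter Set

noncomputable section

/-
Every candidate cost at a point of the quarter plane is dominated by a candidate cost at any
point of the same circle that lies closer to the road, because a field leg from the road
point `(z, 0)` to `(x, y)` gets shorter as `x` grows along the circle. Hence, in polar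
coordinates `(r sin ϑ, r cos ϑ)`, `J` is even in `ϑ` and nonincreasing on `[0, π/2]`. The
reflection `Ψ_a` sends the angle `ϑ` to `π - 2a - ϑ`, and of `ϑ` and `π - 2a - ϑ` the one
nearer to `π/2` is the one on the road side of the cone's bisector.
-/

lemma one_le_Hr (pq : ℝ → ℝ) (q : ℝ) : 1 ≤ Hr pq q := by
  unfold Hr; nlinarith [sq_nonneg q, sq_nonneg (pq q)]

lemma neg_one_le_Lf_s18 (v₁ v₂ : ℝ) : -1 ≤ Lf v₁ v₂ := by
  unfold Lf; nlinarith [sq_nonneg v₁, sq_nonneg v₂]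

lemma sInf_Jset_le_of_sq_add_sq_eq (pq : ℝ → ℝ) {x x' y y' : ℝ}
    (hx' : 0 ≤ x') (hxx' : x' ≤ x) (hy : 0 ≤ y) (hy' : 0 ≤ y')
    (hrad : x ^ 2 + y ^ 2 = x' ^ 2 + y' ^ 2) :
    sInf (Jset pq x y) ≤ sInf (Jset pq x' y') := by
  suffices hdom : ∀ c' ∈ Jset pq x' y', ∃ c ∈ Jset pq x y, c ≤ c' by
    refine le_csInf ⟨_, Or.inl (Or.inl rfl)⟩ fun c' hc' => ?_
    obtain ⟨c, hc, hcc'⟩ := hdom c' hc'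
    exact csInf_le_of_le (Jset_bddBelow pq x y) hc hcc'
  rintro c' ((rfl | ⟨τ, z, hτ0, hτ1, hz0, hzx', rfl⟩) | hc')
  · exact ⟨Lf x y, Or.inl (Or.inl rfl), by unfold Lf; linarith⟩
  · refine ⟨_, Or.inl (Or.inr ⟨τ, z, hτ0, hτ1, hz0, hzx'.trans hxx', rfl⟩), ?_⟩
    have hshorter : (x - z) ^ 2 + y ^ 2 ≤ (x' - z) ^ 2 + y' ^ 2 := by
      nlinarith [mul_nonneg hz0 (sub_nonneg.2 hxx')]
    have hscaled : ((x - z) ^ 2 + y ^ 2) / (1 - τ) ^ 2 ≤ ((x' - z) ^ 2 + y' ^ 2) / (1 - τ) ^ 2 := by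
      gcongr
    simp only [Lf, div_pow, ← add_div]
    nlinarith
  · split_ifs at hc' with hy'0
    · obtain rfl : x = x' := by nlinarith
      obtain rfl : y = 0 := by nlinarith
      exact ⟨c', Or.inr (by simpa using hc'), le_rfl⟩
    · exact hc'.elim

lemma J_neg_left (pq : ℝ → ℝ) (x y : ℝ) : J pq (-x) y = J pq x y := by
  simp only [J, abs_neg]

lemma J_polar_neg (pq : ℝ → ℝ) (r ϑ : ℝ) :
    J pq (r * sin (-ϑ)) (r * cos (-ϑ)) = J pq (r * sin ϑ) (r * cos ϑ) := by
  rw [sin_neg, cos_neg, mul_neg, J_neg_left]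

lemma J_polar_antitoneOn (pq : ℝ → ℝ) {r : ℝ} (hr : 0 ≤ r) :
    AntitoneOn (fun ϑ => J pq (r * sin ϑ) (r * cos ϑ)) (Icc 0 (π / 2)) := by
  intro ψ hψ ϑ hϑ hψϑ
  have hsin : ∀ {φ}, φ ∈ Icc 0 (π / 2) → 0 ≤ r * sin φ := fun hφ =>
    mul_nonneg hr (sin_nonneg_of_nonneg_of_le_pi hφ.1 (by linarith [hφ.2, pi_pos]))
  have hcos : ∀ {φ}, φ ∈ Icc 0 (π / 2) → 0 ≤ r * cos φ := fun hφ =>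
    mul_nonneg hr (cos_nonneg_of_mem_Icc ⟨by linarith [hφ.1, pi_pos], hφ.2⟩)
  have hsin_le : r * sin ψ ≤ r * sin ϑ := mul_le_mul_of_nonneg_left
    (strictMonoOn_sin.monotoneOn ⟨by linarith [hψ.1, pi_pos], hψ.2⟩
      ⟨by linarith [hϑ.1, pi_pos], hϑ.2⟩ hψϑ) hr
  simp only [J, abs_of_nonneg (hsin hψ), abs_of_nonneg (hsin hϑ)]
  exact sInf_Jset_le_of_sq_add_sq_eq pq (hsin hψ) hsin_le (hcos hϑ) (hcos hψ)
    (by nlinarith [sin_sq_add_cos_sq ϑ, sin_sq_add_cos_sq ψ])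

lemma J_polar_le_of_abs_le (pq : ℝ → ℝ) {r ϑ ψ : ℝ} (hr : 0 ≤ r)
    (hϑ : ϑ ≤ π / 2) (hψϑ : |ψ| ≤ ϑ) :
    J pq (r * sin ϑ) (r * cos ϑ) ≤ J pq (r * sin ψ) (r * cos ψ) := by
  have hψ : J pq (r * sin |ψ|) (r * cos |ψ|) = J pq (r * sin ψ) (r * cos ψ) := by
    rcases abs_choice ψ with h | h <;> rw [h]
    exact J_polar_neg pq r ψ
  rw [← hψ]
  have habs := abs_nonneg ψ
  exact J_polar_antitoneOn pq hr ⟨habs, hψϑ.trans hϑ⟩ ⟨habs.trans hψϑ, hϑ⟩ hψϑ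

lemma Psi_polar (a r ϑ : ℝ) :
    Psi a (r * sin ϑ, r * cos ϑ) = (r * sin (π - 2 * a - ϑ), r * cos (π - 2 * a - ϑ)) := by
  have harg : π - 2 * a - ϑ = π - (ϑ + 2 * a) := by ring
  simp only [Psi, harg, sin_pi_sub, cos_pi_sub, sin_add, cos_add, Prod.mk.injEq]
  constructor <;> ring

theorem Ja_by_reflection_general
    (pq : ℝ → ℝ)
    (a : ℝ) (ha : a ≤ π / 2)
    (r ϑ : ℝ) (hr : 0 ≤ r) :
    (π / 2 - a ≤ ϑ → ϑ ≤ π / 2 →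
      min (J pq (r * Real.sin ϑ) (r * Real.cos ϑ))
          (J pq (Psi a (r * Real.sin ϑ, r * Real.cos ϑ)).1
            (Psi a (r * Real.sin ϑ, r * Real.cos ϑ)).2)
        = J pq (r * Real.sin ϑ) (r * Real.cos ϑ)) ∧
    (π / 2 - 2 * a ≤ ϑ → ϑ ≤ π / 2 - a →
      min (J pq (r * Real.sin ϑ) (r * Real.cos ϑ))
          (J pq (Psi a (r * Real.sin ϑ, r * Real.cos ϑ)).1
            (Psi a (r * Real.sin ϑ, r * Real.cos ϑ)).2)
        = J pq (Psi a (r * Real.sin ϑ, r * Real.cos ϑ)).1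
            (Psi a (r * Real.sin ϑ, r * Real.cos ϑ)).2) := by
  rw [Psi_polar]
  constructor
  · intro h₁ h₂
    exact min_eq_left (J_polar_le_of_abs_le pq hr h₂ (abs_le.2 ⟨by linarith, by linarith⟩))
  · intro h₁ h₂
    exact min_eq_right
      (J_polar_le_of_abs_le pq hr (by linarith) (abs_le.2 ⟨by linarith, by linarith⟩))

/-- In the cone of opening `2a`, the value function
`J_a = min{J, J ∘ Ψ_a}` equals `J` on the half of the cone adjacent to the
positive `x`-axis and equals `J ∘ Ψ_a` on the other half. -/
theorem Ja_by_reflection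
    (D μ ν κ : ℝ) (hD : 1 < D) (hμ : 0 < μ) (hν : 0 < ν) (hκ : 0 < κ)
    (pq : ℝ → ℝ) (hpq : IsCriticalSlope D μ ν κ pq)
    (a : ℝ) (ha0 : 0 < a) (ha : a ≤ π / 2)
    (r ϑ : ℝ) (hr : 0 ≤ r) :
    (π / 2 - a ≤ ϑ → ϑ ≤ π / 2 →
      min (J pq (r * Real.sin ϑ) (r * Real.cos ϑ))
          (J pq (Psi a (r * Real.sin ϑ, r * Real.cos ϑ)).1
            (Psi a (r * Real.sin ϑ, r * Real.cos ϑ)).2)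
        = J pq (r * Real.sin ϑ) (r * Real.cos ϑ)) ∧
    (π / 2 - 2 * a ≤ ϑ → ϑ ≤ π / 2 - a →
      min (J pq (r * Real.sin ϑ) (r * Real.cos ϑ))
          (J pq (Psi a (r * Real.sin ϑ, r * Real.cos ϑ)).1
            (Psi a (r * Real.sin ϑ, r * Real.cos ϑ)).2)
        = J pq (Psi a (r * Real.sin ϑ, r * Real.cos ϑ)).1
            (Psi a (r * Real.sin ϑ, r * Real.cos ϑ)).2) :=
  Ja_by_reflection_general pq a ha r ϑ hr
end
end
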